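/- arXiv:2408.16525 — 4 statements merged into one kernel-verified Lean document; each statement's English description precedes it below -/
import Mathlib

section
/- Let κ < 0 and N > 1 be real, let (a,b) be a nonempty bounded open real interval, and let h be an MCP(κ,N) density on (a,b). Set c := √(−κ/(N−1)). Then for every x ∈ (a,b) one has h(x) ≤ (1/(b−a)) · (∫₀¹ (sinh(c·r·(b−a))/sinh(c·(b−a)))^{N−1} dr)^{−1} · ∫_{(a,b)} h(s) ds, where the integrals are Lebesgue integrals. -/
/-!
Along a segment `[x₀, x₁]`, the MCP condition raised to the power `N - 1` bounds `h y` from below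
by `(sinh (c |x₁ - y|) / sinh (c |x₁ - x₀|)) ^ (N - 1) * h x₀`. Read in both directions, this
squeezes `h` near every point and bounds it by a multiple of its value at the midpoint, so `h` is
continuous and bounded, hence integrable. Letting `x₁` run to `b`, and integrating over `(x, b)`,
gives `∫ₓᵇ h ≥ (b - x) F(b - x) h x` with `F(L) = ∫₀¹ (sinh (c r L) / sinh (c L)) ^ (N - 1) dr`;
the same holds on `(a, x)` by reflection. Since `u ↦ sinh (r u) / sinh u` is antitone, so is `F`,
and adding the two estimates with `F(x - a), F(b - x) ≥ F(b - a)` gives the claim.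
-/

open Set MeasureTheory

/-- An `MCP(κ,N)` density on the set `I ⊆ ℝ`, for a constant negative curvature
parameter `κ`, with the explicit hyperbolic distortion coefficients. -/
def IsMCPNegDensity (κ N : ℝ) (I : Set ℝ) (h : ℝ → ℝ) : Prop :=
  (∀ x ∈ I, 0 ≤ h x) ∧
    ∀ x₀ ∈ I, ∀ x₁ ∈ I, x₀ ≠ x₁ → ∀ t ∈ Set.Icc (0 : ℝ) 1,
      Real.sinh (Real.sqrt (-κ / (N - 1)) * ((1 - t) * |x₁ - x₀|)) /
          Real.sinh (Real.sqrt (-κ / (N - 1)) * |x₁ - x₀|) * h x₀ ^ (1 / (N - 1)) ≤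
        h ((1 - t) * x₀ + t * x₁) ^ (1 / (N - 1))

open Real Filter Topology

theorem mul_cosh_mul_mul_sinh_le {r u : ℝ} (hr₀ : 0 ≤ r) (hr₁ : r ≤ 1) (hu : 0 ≤ u) :
    r * cosh (r * u) * sinh u ≤ sinh (r * u) * cosh u := by
  let G v := sinh (r * v) * cosh v - r * cosh (r * v) * sinh v
  have hG : ∀ v, HasDerivAt G ((1 - r ^ 2) * (sinh (r * v) * sinh v)) v := fun v => by
    have hrv : HasDerivAt (r * ·) r v := by simpa using (hasDerivAt_id v).const_mul r
    refine (hrv.sinh.mul (hasDerivAt_cosh v) |>.sub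
      ((hrv.cosh.const_mul r).mul (hasDerivAt_sinh v))).congr_deriv ?_
    ring
  have hmono : MonotoneOn G (Ici 0) := by
    refine monotoneOn_of_hasDerivWithinAt_nonneg (convex_Ici 0)
      (fun v _ => (hG v).continuousAt.continuousWithinAt)
      (fun v _ => (hG v).hasDerivWithinAt) fun v hv => ?_
    rw [interior_Ici, mem_Ioi] at hv
    exact mul_nonneg (by nlinarith) (by positivity)
  have := hmono self_mem_Ici hu hu
  simp only [G, mul_zero, sinh_zero, cosh_zero] at this
  linarith

theorem antitoneOn_sinh_mul_div_sinh {r : ℝ} (hr₀ : 0 ≤ r) (hr₁ : r ≤ 1) :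
    AntitoneOn (fun u => sinh (r * u) / sinh u) (Ioi 0) := by
  have hf : ∀ v ∈ Ioi (0 : ℝ), HasDerivAt (fun u => sinh (r * u) / sinh u)
      ((r * cosh (r * v) * sinh v - sinh (r * v) * cosh v) / sinh v ^ 2) v := fun v hv => by
    have hrv : HasDerivAt (r * ·) r v := by simpa using (hasDerivAt_id v).const_mul r
    refine (hrv.sinh.div (hasDerivAt_sinh v) (sinh_pos_iff.2 hv).ne').congr_deriv ?_
    ring
  refine antitoneOn_of_deriv_nonpos (convex_Ioi 0)
    (fun v hv => (hf v hv).continuousAt.continuousWithinAt)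
    (fun v hv => (hf v (interior_subset hv)).differentiableAt.differentiableWithinAt)
    fun v hv => ?_
  rw [interior_Ioi] at hv
  rw [(hf v hv).deriv]
  exact div_nonpos_of_nonpos_of_nonneg
    (sub_nonpos.2 (mul_cosh_mul_mul_sinh_le hr₀ hr₁ (le_of_lt hv))) (sq_nonneg _)

noncomputable def distortionIntegral (c p D : ℝ) : ℝ :=
  ∫ r in (0 : ℝ)..1, (sinh (c * (r * D)) / sinh (c * D)) ^ p

theorem continuous_sinh_ratio_rpow {c p D : ℝ} (hp : 0 ≤ p) :
    Continuous fun r => (sinh (c * (r * D)) / sinh (c * D)) ^ p :=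
  Continuous.rpow_const (by fun_prop) fun _ => Or.inr hp

theorem distortionIntegral_pos {c p D : ℝ} (hc : 0 < c) (hp : 0 ≤ p) (hD : 0 < D) :
    0 < distortionIntegral c p D :=
  intervalIntegral.intervalIntegral_pos_of_pos_on
    ((continuous_sinh_ratio_rpow hp).intervalIntegrable 0 1)
    (fun r hr => rpow_pos_of_pos (div_pos (by have := hr.1; positivity) (by positivity)) _)
    zero_lt_one

theorem distortionIntegral_antitoneOn {c p : ℝ} (hc : 0 < c) (hp : 0 ≤ p) :
    AntitoneOn (distortionIntegral c p) (Ioi 0) := by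
  intro L hL D hD hLD
  refine intervalIntegral.integral_mono_on zero_le_one
    ((continuous_sinh_ratio_rpow hp).intervalIntegrable 0 1)
    ((continuous_sinh_ratio_rpow hp).intervalIntegrable 0 1) fun r hr => ?_
  have hD : 0 < D := hD
  have hr₀ := hr.1
  refine rpow_le_rpow (div_nonneg (by positivity) (by positivity)) ?_ hp
  simpa only [mul_left_comm c r] using antitoneOn_sinh_mul_div_sinh hr.1 hr.2
    (mul_pos hc hL) (mul_pos hc hD) (mul_le_mul_of_nonneg_left hLD hc.le)

theorem integral_comp_sub_left_eq_mul_integral_unitInterval (f : ℝ → ℝ) (x b : ℝ) :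
    ∫ s in x..b, f (b - s) = (b - x) * ∫ r in (0 : ℝ)..1, f (r * (b - x)) := by
  rcases eq_or_ne b x with rfl | hbx
  · simp
  rw [intervalIntegral.integral_comp_sub_left, intervalIntegral.integral_comp_mul_right _
    (sub_ne_zero.2 hbx), sub_self, zero_mul, one_mul, smul_eq_mul, mul_inv_cancel_left₀
    (sub_ne_zero.2 hbx)]

noncomputable def mcpScale (κ N : ℝ) : ℝ := √(-κ / (N - 1))

theorem mcpScale_pos {κ N : ℝ} (hκ : κ < 0) (hN : 1 < N) : 0 < mcpScale κ N :=
  sqrt_pos.2 (div_pos (neg_pos.2 hκ) (sub_pos.2 hN))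

namespace IsMCPNegDensity

variable {κ N a b : ℝ} {I : Set ℝ} {h : ℝ → ℝ}

open scoped Pointwise in
theorem comp_neg (hh : IsMCPNegDensity κ N I h) :
    IsMCPNegDensity κ N (-I) (fun x => h (-x)) := by
  refine ⟨fun x hx => hh.1 (-x) hx, fun x₀ hx₀ x₁ hx₁ hne t ht => ?_⟩
  have := hh.2 (-x₀) hx₀ (-x₁) hx₁ (neg_injective.ne hne) t ht
  rwa [neg_sub_neg, abs_sub_comm, show (1 - t) * -x₀ + t * -x₁ = -((1 - t) * x₀ + t * x₁) by ring]
    at this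

theorem rpow_mul_le (hN : 1 < N) (hh : IsMCPNegDensity κ N I h) (hI : I.OrdConnected)
    {x₀ x₁ y : ℝ} (hx₀ : x₀ ∈ I) (hx₁ : x₁ ∈ I) (hy : y ∈ uIcc x₀ x₁) :
    (sinh (mcpScale κ N * |x₁ - y|) / sinh (mcpScale κ N * |x₁ - x₀|)) ^ (N - 1) * h x₀ ≤ h y := by
  have hyI := hI.uIcc_subset hx₀ hx₁ hy
  have hN₁ : 0 < N - 1 := sub_pos.2 hN
  rcases eq_or_ne x₀ x₁ with rfl | hne
  · simp [zero_rpow hN₁.ne', hh.1 y hyI]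
  obtain ⟨t, ht, rfl⟩ : ∃ t ∈ Icc (0 : ℝ) 1, (1 - t) * x₀ + t * x₁ = y := by
    simpa [← segment_eq_uIcc, segment_eq_image] using hy
  have hc : 0 ≤ mcpScale κ N := sqrt_nonneg _
  have h₀ := hh.1 x₀ hx₀
  have ht₁ : 0 ≤ 1 - t := sub_nonneg.2 ht.2
  rw [show x₁ - ((1 - t) * x₀ + t * x₁) = (1 - t) * (x₁ - x₀) by ring, abs_mul, abs_of_nonneg ht₁]
  have hpow : ∀ u : ℝ, 0 ≤ u → (u ^ (1 / (N - 1))) ^ (N - 1) = u := fun u hu => by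
    rw [← rpow_mul hu, one_div_mul_cancel hN₁.ne', rpow_one]
  have hσ : 0 ≤ sinh (mcpScale κ N * ((1 - t) * |x₁ - x₀|)) / sinh (mcpScale κ N * |x₁ - x₀|) :=
    div_nonneg (by positivity) (by positivity)
  calc _ = (sinh (mcpScale κ N * ((1 - t) * |x₁ - x₀|)) / sinh (mcpScale κ N * |x₁ - x₀|) *
        h x₀ ^ (1 / (N - 1))) ^ (N - 1) := by rw [mul_rpow hσ (by positivity), hpow _ h₀]
    _ ≤ (h ((1 - t) * x₀ + t * x₁) ^ (1 / (N - 1))) ^ (N - 1) :=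
        rpow_le_rpow (by positivity) (hh.2 x₀ hx₀ x₁ hx₁ hne t ht) hN₁.le
    _ = _ := hpow _ (hh.1 _ hyI)

theorem le_rpow_mul (hκ : κ < 0) (hN : 1 < N) (hh : IsMCPNegDensity κ N I h)
    (hI : I.OrdConnected) {x y p : ℝ} (hy : y ∈ I) (hp : p ∈ I) (hx : x ∈ uIcc y p)
    (hxp : x ≠ p) :
    h y ≤ (sinh (mcpScale κ N * |p - y|) / sinh (mcpScale κ N * |p - x|)) ^ (N - 1) * h x := by
  have hc := mcpScale_pos hκ hN
  have hyp : y ≠ p := by rintro rfl; exact hxp (by simpa using hx)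
  have hpx : 0 < |p - x| := abs_pos.2 (sub_ne_zero.2 hxp.symm)
  have hpy : 0 < |p - y| := abs_pos.2 (sub_ne_zero.2 hyp.symm)
  rw [← inv_div, inv_rpow (by positivity), inv_mul_eq_div, le_div_iff₀ (by positivity), mul_comm]
  exact hh.rpow_mul_le hN hI hy hp hx

theorem continuousOn (hκ : κ < 0) (hN : 1 < N) (hh : IsMCPNegDensity κ N I h)
    (hIo : IsOpen I) (hI : I.OrdConnected) : ContinuousOn h I := by
  intro x hx
  obtain ⟨δ, hδ, hball⟩ := Metric.isOpen_iff.1 hIo x hx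
  have hsub : Icc (x - δ / 2) (x + δ / 2) ⊆ I := fun y hy =>
    hball (by rw [Real.ball_eq_Ioo]; exact ⟨by linarith [hy.1], by linarith [hy.2]⟩)
  have hm₁ : x - δ / 2 ∈ I := hsub ⟨le_rfl, by linarith⟩
  have hm₂ : x + δ / 2 ∈ I := hsub ⟨by linarith, le_rfl⟩
  -- `h` is squeezed between the two profiles `ρ p` centred at `x ± δ / 2`
  let ρ p y := (sinh (mcpScale κ N * |p - y|) / sinh (mcpScale κ N * |p - x|)) ^ (N - 1) * h x
  have hρ : ∀ p ≠ x, Tendsto (ρ p) (𝓝 x) (𝓝 (h x)) := fun p hpx => by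
    have hc := mcpScale_pos hκ hN
    have : 0 < |p - x| := abs_pos.2 (sub_ne_zero.2 hpx)
    have hcont : ContinuousAt (ρ p) x :=
      (((by fun_prop : Continuous fun y => sinh (mcpScale κ N * |p - y|)).continuousAt.div_const
        _).rpow_const (Or.inr (sub_pos.2 hN).le)).mul continuousAt_const
    simpa [ρ, div_self (by positivity : sinh (mcpScale κ N * |p - x|) ≠ 0)] using hcont.tendsto
  have hlow : ∀ p ∈ I, ∀ y ∈ uIcc x p, ρ p y ≤ h y := fun p hp y hy =>
    hh.rpow_mul_le hN hI hx hp hy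
  have hupp : ∀ p ∈ I, p ≠ x → ∀ y ∈ I, x ∈ uIcc y p → h y ≤ ρ p y := fun p hp hpx y hy hxy =>
    hh.le_rpow_mul hκ hN hI hy hp hxy hpx.symm
  have hev : ∀ᶠ y in 𝓝 x, min (ρ (x - δ / 2) y) (ρ (x + δ / 2) y) ≤ h y ∧
      h y ≤ max (ρ (x - δ / 2) y) (ρ (x + δ / 2) y) := by
    filter_upwards [Icc_mem_nhds (by linarith : x - δ / 2 < x) (by linarith : x < x + δ / 2)]
      with y hy
    rcases le_total y x with hyx | hxy
    · exact ⟨(min_le_left _ _).trans (hlow _ hm₁ y (Icc_subset_uIcc' ⟨hy.1, hyx⟩)),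
        (hupp _ hm₂ (by linarith) y (hsub hy) (Icc_subset_uIcc ⟨hyx, by linarith⟩)).trans
          (le_max_right _ _)⟩
    · exact ⟨(min_le_right _ _).trans (hlow _ hm₂ y (Icc_subset_uIcc ⟨hxy, hy.2⟩)),
        (hupp _ hm₁ (by linarith) y (hsub hy) (Icc_subset_uIcc' ⟨by linarith, hxy⟩)).trans
          (le_max_left _ _)⟩
  refine ContinuousAt.continuousWithinAt (tendsto_of_tendsto_of_tendsto_of_le_of_le' ?_ ?_
    (hev.mono fun _ hy => hy.1) (hev.mono fun _ hy => hy.2))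
  · simpa using (hρ _ (by linarith)).min (hρ (x + δ / 2) (by linarith))
  · simpa using (hρ _ (by linarith)).max (hρ (x + δ / 2) (by linarith))

theorem bddAbove_image_Ioo (hκ : κ < 0) (hN : 1 < N) (hh : IsMCPNegDensity κ N (Ioo a b) h) :
    BddAbove (h '' Ioo a b) := by
  rcases le_or_gt b a with hba | hab
  · simp [Ioo_eq_empty_of_le hba]
  have hc := mcpScale_pos hκ hN
  set x := (a + b) / 2 with hx_def
  set δ := (b - a) / 4 with hδ_def
  have hx : x ∈ Ioo a b := ⟨by linarith, by linarith⟩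
  have hδ : 0 < δ := by positivity
  have hxδ : a < x - δ ∧ x + δ < b := ⟨by linarith, by linarith⟩
  refine ⟨(sinh (mcpScale κ N * (b - a)) / sinh (mcpScale κ N * δ)) ^ (N - 1) * h x, ?_⟩
  rintro _ ⟨y, hy, rfl⟩
  have hbound : ∀ p ∈ Ioo a b, |p - x| = δ → x ∈ uIcc y p →
      h y ≤ (sinh (mcpScale κ N * (b - a)) / sinh (mcpScale κ N * δ)) ^ (N - 1) * h x := by
    intro p hp hpx hxy
    refine (hh.le_rpow_mul hκ hN ordConnected_Ioo hy hp hxy ?_).trans ?_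
    · rintro rfl; simp [hδ.ne] at hpx
    rw [hpx]
    have hpy : |p - y| ≤ b - a :=
      abs_sub_le_iff.2 ⟨by linarith [hp.2, hy.1], by linarith [hp.1, hy.2]⟩
    have hhx := hh.1 x hx
    gcongr
    exact sinh_le_sinh.2 (by gcongr)
  rcases le_total y x with hyx | hxy
  · exact hbound (x + δ) ⟨by linarith, hxδ.2⟩ (by simp [abs_of_pos hδ])
      (Icc_subset_uIcc ⟨hyx, by linarith⟩)
  · exact hbound (x - δ) ⟨hxδ.1, by linarith⟩ (by simp [abs_of_pos hδ])
      (Icc_subset_uIcc' ⟨by linarith, hxy⟩)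

theorem integrableOn_Ioo (hκ : κ < 0) (hN : 1 < N) (hh : IsMCPNegDensity κ N (Ioo a b) h) :
    IntegrableOn h (Ioo a b) := by
  obtain ⟨C, hC⟩ := hh.bddAbove_image_Ioo hκ hN
  refine Integrable.of_bound
    ((hh.continuousOn hκ hN isOpen_Ioo ordConnected_Ioo).aestronglyMeasurable measurableSet_Ioo) C
    (ae_restrict_of_forall_mem measurableSet_Ioo fun y hy => ?_)
  rw [norm_of_nonneg (hh.1 y hy)]
  exact hC ⟨y, hy, rfl⟩

theorem intervalIntegrable (hκ : κ < 0) (hN : 1 < N) (hh : IsMCPNegDensity κ N (Ioo a b) h)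
    {x y : ℝ} (hx : x ∈ Icc a b) (hy : y ∈ Icc a b) : IntervalIntegrable h volume x y :=
  (((integrableOn_Icc_iff_integrableOn_Ioo).2 (hh.integrableOn_Ioo hκ hN)).mono_set
    (uIcc_subset_Icc hx hy)).intervalIntegrable

theorem rpow_mul_le_of_mem_Ioo (hκ : κ < 0) (hN : 1 < N) (hh : IsMCPNegDensity κ N (Ioo a b) h)
    {x s : ℝ} (hx : x ∈ Ioo a b) (hs : s ∈ Ioo x b) :
    (sinh (mcpScale κ N * (b - s)) / sinh (mcpScale κ N * (b - x))) ^ (N - 1) * h x ≤ h s := by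
  have hc := mcpScale_pos hκ hN
  have hbx : 0 < b - x := by linarith [hs.1, hs.2]
  -- let the far endpoint `x₁` of the segment `[x, x₁] ∋ s` tend to `b`
  have hcont : ContinuousAt (fun x₁ =>
      (sinh (mcpScale κ N * (x₁ - s)) / sinh (mcpScale κ N * (x₁ - x))) ^ (N - 1) * h x) b :=
    (((by fun_prop : Continuous fun x₁ => sinh (mcpScale κ N * (x₁ - s))).continuousAt.div
      (by fun_prop) (by positivity)).rpow_const (Or.inr (sub_pos.2 hN).le)).mul continuousAt_const
  refine le_of_tendsto (hcont.tendsto.mono_left (nhdsWithin_le_nhds (s := Iio b))) ?_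
  filter_upwards [Ioo_mem_nhdsLT hs.2] with x₁ hx₁
  have := hh.rpow_mul_le hN ordConnected_Ioo hx ⟨by linarith [hx.1, hs.1, hx₁.1], hx₁.2⟩
    (Icc_subset_uIcc ⟨hs.1.le, hx₁.1.le⟩)
  rwa [abs_of_pos (by linarith [hx₁.1]), abs_of_pos (by linarith [hs.1, hx₁.1])] at this

theorem mul_distortionIntegral_le_integral_right (hκ : κ < 0) (hN : 1 < N)
    (hh : IsMCPNegDensity κ N (Ioo a b) h) {x D : ℝ} (hx : x ∈ Ioo a b) (hD : b - x ≤ D) :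
    (b - x) * distortionIntegral (mcpScale κ N) (N - 1) D * h x ≤ ∫ s in x..b, h s := by
  have hc := mcpScale_pos hκ hN
  have hN₁ : 0 ≤ N - 1 := (sub_pos.2 hN).le
  have hbx : 0 < b - x := sub_pos.2 hx.2
  have hσ : Continuous fun s =>
      (sinh (mcpScale κ N * (b - s)) / sinh (mcpScale κ N * (b - x))) ^ (N - 1) * h x :=
    (Continuous.rpow_const (by fun_prop) fun _ => Or.inr hN₁).mul continuous_const
  calc (b - x) * distortionIntegral (mcpScale κ N) (N - 1) D * h x
      ≤ (b - x) * distortionIntegral (mcpScale κ N) (N - 1) (b - x) * h x := by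
        have hhx := hh.1 x hx
        gcongr
        exact distortionIntegral_antitoneOn hc hN₁ hbx (hbx.trans_le hD) hD
    _ = ∫ s in x..b,
          (sinh (mcpScale κ N * (b - s)) / sinh (mcpScale κ N * (b - x))) ^ (N - 1) * h x := by
        rw [intervalIntegral.integral_mul_const, integral_comp_sub_left_eq_mul_integral_unitInterval
          (fun u => (sinh (mcpScale κ N * u) / sinh (mcpScale κ N * (b - x))) ^ (N - 1))]
        rfl
    _ ≤ ∫ s in x..b, h s :=
        intervalIntegral.integral_mono_on_of_le_Ioo hx.2.le
          (hσ.intervalIntegrable x b)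
          (hh.intervalIntegrable hκ hN (Ioo_subset_Icc_self hx)
            (right_mem_Icc.2 (hx.1.trans hx.2).le))
          fun s hs => hh.rpow_mul_le_of_mem_Ioo hκ hN hx hs

theorem mul_distortionIntegral_le_integral_left (hκ : κ < 0) (hN : 1 < N)
    (hh : IsMCPNegDensity κ N (Ioo a b) h) {x D : ℝ} (hx : x ∈ Ioo a b) (hD : x - a ≤ D) :
    (x - a) * distortionIntegral (mcpScale κ N) (N - 1) D * h x ≤ ∫ s in a..x, h s := by
  have hneg : IsMCPNegDensity κ N (Ioo (-b) (-a)) (fun x => h (-x)) := by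
    simpa using hh.comp_neg
  simpa [intervalIntegral.integral_comp_neg, neg_add_eq_sub] using
    hneg.mul_distortionIntegral_le_integral_right hκ hN (x := -x)
      ⟨by linarith [hx.2], by linarith [hx.1]⟩ (by linarith)

end IsMCPNegDensity

/-- Zeroth-order uniform a priori estimate for `MCP(κ,N)` densities (`κ < 0`)
on a bounded open interval `(a,b)`, with `c = √(-κ/(N-1))`. -/
theorem mcp_neg_density_sup_bound (κ N a b : ℝ) (h : ℝ → ℝ)
    (hκ : κ < 0) (hN : 1 < N) (hab : a < b)
    (hMCP : IsMCPNegDensity κ N (Set.Ioo a b) h) :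
    ∀ x ∈ Set.Ioo a b,
      h x ≤ (1 / (b - a)) *
          (∫ r in (0:ℝ)..1,
              (Real.sinh (Real.sqrt (-κ / (N - 1)) * (r * (b - a))) /
                Real.sinh (Real.sqrt (-κ / (N - 1)) * (b - a))) ^ (N - 1))⁻¹ *
          ∫ s in Set.Ioo a b, h s := by
  intro x hx
  change h x ≤ 1 / (b - a) * (distortionIntegral (mcpScale κ N) (N - 1) (b - a))⁻¹ *
    ∫ s in Ioo a b, h s
  have hF := distortionIntegral_pos (mcpScale_pos hκ hN) (sub_pos.2 hN).le (sub_pos.2 hab)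
  have hleft := hMCP.mul_distortionIntegral_le_integral_left hκ hN hx (D := b - a)
    (by linarith [hx.2])
  have hright := hMCP.mul_distortionIntegral_le_integral_right hκ hN hx (D := b - a)
    (by linarith [hx.1])
  have hsplit : ∫ s in Ioo a b, h s = (∫ s in a..x, h s) + ∫ s in x..b, h s := by
    rw [intervalIntegral.integral_add_adjacent_intervals
      (hMCP.intervalIntegrable hκ hN (left_mem_Icc.2 hab.le) (Ioo_subset_Icc_self hx))
      (hMCP.intervalIntegrable hκ hN (Ioo_subset_Icc_self hx) (right_mem_Icc.2 hab.le)),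
      intervalIntegral.integral_of_le hab.le, integral_Ioc_eq_integral_Ioo]
  rw [hsplit, one_div, ← mul_inv, ← div_eq_inv_mul, le_div_iff₀ (mul_pos (sub_pos.2 hab) hF)]
  linarith
end

section
/- Let κ < 0 and N > 1 be real and let h be a CD(κ,N) density on the compact interval [a,b], where a ≤ 0 < b, such that h is positive at every point of [a,b). Assume the right derivative H := (log∘h)'⁺(0) exists in ℝ. Set c := √(−κ/(N−1)). Then for every θ ∈ (0,b) one has cosh(c·θ) + (H/(N−1))·(1/c)·sinh(c·θ) > 0 and h(θ) ≤ h(0)·(cosh(c·θ) + (H/(N−1))·(1/c)·sinh(c·θ))^{N−1}. -/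
/-!
Put `g = h ^ (1/(N-1))`. Between the endpoints `0` and `θ`, the `CD(κ,N)` condition reads
`sinh (c(θ-s)) g(0) + sinh (cs) g(θ) ≤ sinh (cθ) g(s)` for `0 < s < θ`. Solving for `g(θ)`
gives a quotient whose numerator and denominator both vanish at `s = 0`, so as `s → 0⁺` it tends
to the quotient of their right derivatives, `g(0) cosh (cθ) + g'(0) sinh (cθ) / c`,
where `g'(0) = g(0) H / (N-1)`. Since `g(θ) > 0` this bracket is positive, and raising the bound
to the power `N - 1` gives the claim.
-/

open Set

/-- A `CD(κ,N)` density on the set `I ⊆ ℝ`, for a constant negative curvature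
parameter `κ`, with the explicit hyperbolic distortion coefficients. -/
def IsCDNegDensity (κ N : ℝ) (I : Set ℝ) (h : ℝ → ℝ) : Prop :=
  (∀ x ∈ I, 0 ≤ h x) ∧
    ∀ x₀ ∈ I, ∀ x₁ ∈ I, x₀ ≠ x₁ → ∀ t ∈ Set.Icc (0 : ℝ) 1,
      Real.sinh (Real.sqrt (-κ / (N - 1)) * ((1 - t) * |x₁ - x₀|)) /
            Real.sinh (Real.sqrt (-κ / (N - 1)) * |x₁ - x₀|) * h x₀ ^ (1 / (N - 1)) +
          Real.sinh (Real.sqrt (-κ / (N - 1)) * (t * |x₁ - x₀|)) /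
            Real.sinh (Real.sqrt (-κ / (N - 1)) * |x₁ - x₀|) * h x₁ ^ (1 / (N - 1)) ≤
        h ((1 - t) * x₀ + t * x₁) ^ (1 / (N - 1))

open Filter Topology

theorem HasDerivWithinAt.rpow_of_log {h : ℝ → ℝ} {H x : ℝ} {s : Set ℝ}
    (hH : HasDerivWithinAt (fun y => Real.log (h y)) H s x)
    (hpos : ∀ᶠ y in 𝓝[s] x, 0 < h y) (hx : 0 < h x) (p : ℝ) :
    HasDerivWithinAt (fun y => h y ^ p) (h x ^ p * (p * H)) s x := by
  have hexp := (hH.const_mul p).exp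
  rw [mul_comm p (Real.log (h x)), ← Real.rpow_def_of_pos hx] at hexp
  refine hexp.congr_of_eventuallyEq ?_ ?_
  · filter_upwards [hpos] with y hy
    rw [Real.rpow_def_of_pos hy, mul_comm]
  · rw [Real.rpow_def_of_pos hx, mul_comm]

theorem tendsto_div_nhdsGT_of_hasDerivWithinAt {f g : ℝ → ℝ} {f' g' x : ℝ}
    (hf : HasDerivWithinAt f f' (Ioi x) x) (hg : HasDerivWithinAt g g' (Ioi x) x)
    (hf0 : f x = 0) (hg0 : g x = 0) (hg' : g' ≠ 0) :
    Tendsto (fun y => f y / g y) (𝓝[>] x) (𝓝 (f' / g')) := by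
  have hslope := ((hasDerivWithinAt_iff_tendsto_slope' self_notMem_Ioi).mp hf).div
    ((hasDerivWithinAt_iff_tendsto_slope' self_notMem_Ioi).mp hg) hg'
  refine hslope.congr' ?_
  filter_upwards [self_mem_nhdsWithin] with y hy
  simp only [Pi.div_apply, slope_def_field, hf0, hg0, sub_zero]
  exact div_div_div_cancel_right₀ (sub_ne_zero.mpr (ne_of_gt hy)) _ _

theorem IsCDNegDensity.sinh_mul_add_sinh_mul_le {κ N : ℝ} {I : Set ℝ} {h : ℝ → ℝ}
    (hCD : IsCDNegDensity κ N I h) {x₀ x₁ y : ℝ} (hx₀ : x₀ ∈ I) (hx₁ : x₁ ∈ I)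
    (hy₀ : x₀ ≤ y) (hy₁ : y ≤ x₁) (hx : x₀ < x₁) :
    Real.sinh (Real.sqrt (-κ / (N - 1)) * (x₁ - y)) * h x₀ ^ (1 / (N - 1)) +
        Real.sinh (Real.sqrt (-κ / (N - 1)) * (y - x₀)) * h x₁ ^ (1 / (N - 1)) ≤
      Real.sinh (Real.sqrt (-κ / (N - 1)) * (x₁ - x₀)) * h y ^ (1 / (N - 1)) := by
  set c := Real.sqrt (-κ / (N - 1))
  rcases (Real.sqrt_nonneg (-κ / (N - 1))).eq_or_lt with hc | hc
  · simp [c, ← hc]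
  have hd : 0 < x₁ - x₀ := sub_pos.mpr hx
  have hS : 0 < Real.sinh (c * (x₁ - x₀)) := Real.sinh_pos_iff.mpr (mul_pos hc hd)
  set t := (y - x₀) / (x₁ - x₀)
  have ht : t ∈ Icc (0 : ℝ) 1 :=
    ⟨div_nonneg (by linarith) hd.le, (div_le_one hd).mpr (by linarith)⟩
  have hCDt := hCD.2 x₀ hx₀ x₁ hx₁ hx.ne t ht
  have e₁ : (1 - t) * |x₁ - x₀| = x₁ - y := by
    rw [abs_of_pos hd]; simp only [t]; field_simp; ring
  have e₂ : t * |x₁ - x₀| = y - x₀ := by rw [abs_of_pos hd]; simp only [t]; field_simp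
  have e₃ : (1 - t) * x₀ + t * x₁ = y := by simp only [t]; field_simp; ring
  rw [e₁, e₂, e₃, abs_of_pos hd, div_mul_eq_mul_div, div_mul_eq_mul_div, ← add_div,
    div_le_iff₀ hS] at hCDt
  linarith [mul_comm (h y ^ (1 / (N - 1))) (Real.sinh (c * (x₁ - x₀)))]

theorem le_mul_cosh_add_mul_sinh_of_sinh_three_point {g : ℝ → ℝ} {g' c θ : ℝ} (hc : 0 < c)
    (hθ : 0 < θ) (hg : HasDerivWithinAt g g' (Ioi 0) 0)
    (hineq : ∀ s ∈ Ioo 0 θ,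
      Real.sinh (c * (θ - s)) * g 0 + Real.sinh (c * s) * g θ ≤ Real.sinh (c * θ) * g s) :
    g θ ≤ g 0 * Real.cosh (c * θ) + g' * c⁻¹ * Real.sinh (c * θ) := by
  set F : ℝ → ℝ := fun s => Real.sinh (c * θ) * g s - g 0 * Real.sinh (c * (θ - s))
  have hF : HasDerivWithinAt F (Real.sinh (c * θ) * g' + g 0 * (c * Real.cosh (c * θ)))
      (Ioi 0) 0 := by
    have hsinh := (((hasDerivAt_id (0 : ℝ)).const_sub θ).const_mul c).sinh.const_mul (g 0)
    refine ((hg.const_mul (Real.sinh (c * θ))).sub hsinh.hasDerivWithinAt).congr_deriv ?_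
    simp only [id, sub_zero]
    ring
  have hsinh : HasDerivAt (fun s => Real.sinh (c * s)) c 0 := by
    simpa using ((hasDerivAt_id (0 : ℝ)).const_mul c).sinh
  have hlim := tendsto_div_nhdsGT_of_hasDerivWithinAt hF hsinh.hasDerivWithinAt
    (by simp [F, mul_comm]) (by simp) hc.ne'
  have hbound : ∀ᶠ s in 𝓝[>] 0, g θ ≤ F s / Real.sinh (c * s) := by
    filter_upwards [Ioo_mem_nhdsGT hθ] with s hs
    rw [le_div_iff₀ (Real.sinh_pos_iff.mpr (mul_pos hc hs.1))]
    linarith [hineq s hs]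
  exact (ge_of_tendsto hlim hbound).trans_eq (by field_simp; ring)

theorem le_mul_rpow_of_rpow_one_div_le {u v X q : ℝ} (hu : 0 ≤ u) (hv : 0 ≤ v) (hX : 0 ≤ X)
    (hq : 0 < q) (h : u ^ (1 / q) ≤ v ^ (1 / q) * X) : u ≤ v * X ^ q := by
  have hpow := Real.rpow_le_rpow (by positivity) h hq.le
  rwa [Real.mul_rpow (by positivity) hX, ← Real.rpow_mul hu, ← Real.rpow_mul hv,
    one_div_mul_cancel hq.ne', Real.rpow_one, Real.rpow_one] at hpow

/-- Jacobian comparison for `CD(κ,N)` densities (`κ < 0`) on `[a,b]` with `a ≤ 0 < b`,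
where `c = √(-κ/(N-1))` and `H` is the right logarithmic derivative of `h` at `0`. -/
theorem cd_neg_density_jacobian_comparison (κ N a b H : ℝ) (h : ℝ → ℝ)
    (hκ : κ < 0) (hN : 1 < N) (ha : a ≤ 0) (hb : 0 < b)
    (hCD : IsCDNegDensity κ N (Set.Icc a b) h)
    (hpos : ∀ x ∈ Set.Ico a b, 0 < h x)
    (hH : HasDerivWithinAt (fun y => Real.log (h y)) H (Set.Ioi 0) 0) :
    ∀ θ ∈ Set.Ioo 0 b,
      0 < Real.cosh (Real.sqrt (-κ / (N - 1)) * θ) +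
          H / (N - 1) * (Real.sqrt (-κ / (N - 1)))⁻¹ *
            Real.sinh (Real.sqrt (-κ / (N - 1)) * θ) ∧
      h θ ≤ h 0 * (Real.cosh (Real.sqrt (-κ / (N - 1)) * θ) +
          H / (N - 1) * (Real.sqrt (-κ / (N - 1)))⁻¹ *
            Real.sinh (Real.sqrt (-κ / (N - 1)) * θ)) ^ (N - 1) := by
  rintro θ ⟨hθ0, hθb⟩
  set c := Real.sqrt (-κ / (N - 1))
  set g : ℝ → ℝ := fun x => h x ^ (1 / (N - 1))
  have hN1 : 0 < N - 1 := sub_pos.mpr hN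
  have hc : 0 < c := Real.sqrt_pos.mpr (div_pos (neg_pos.mpr hκ) hN1)
  have hh0 : 0 < h 0 := hpos 0 ⟨ha, hb⟩
  have hhθ : 0 < h θ := hpos θ ⟨ha.trans hθ0.le, hθb⟩
  have hg : HasDerivWithinAt g (g 0 * (1 / (N - 1) * H)) (Ioi 0) 0 := by
    refine hH.rpow_of_log ?_ hh0 _
    filter_upwards [Ioo_mem_nhdsGT hb] with y hy using hpos y ⟨ha.trans hy.1.le, hy.2⟩
  have hle : g θ ≤ g 0 * (Real.cosh (c * θ) + H / (N - 1) * c⁻¹ * Real.sinh (c * θ)) := by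
    refine (le_mul_cosh_add_mul_sinh_of_sinh_three_point hc hθ0 hg fun s hs => ?_).trans_eq
      (by ring)
    have hCDs := hCD.sinh_mul_add_sinh_mul_le ⟨ha, hb.le⟩ ⟨ha.trans hθ0.le, hθb.le⟩
      hs.1.le hs.2.le hθ0
    rwa [sub_zero, sub_zero] at hCDs
  have hX := pos_of_mul_pos_right ((Real.rpow_pos_of_pos hhθ _).trans_le hle)
    (Real.rpow_pos_of_pos hh0 _).le
  exact ⟨hX, le_mul_rpow_of_rpow_one_div_le hhθ.le hh0.le hX.le hN1 hle⟩
end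

section
/- Let κ > 0 and N > 1 be real and let h be a CD(κ,N) density on the compact interval [a,b], where a ≤ 0 < b and b−a ≤ π·√((N−1)/κ), such that h is positive at every point of [a,b). Assume the right derivative H := (log∘h)'⁺(0) exists in ℝ. Set c := √(κ/(N−1)). Then for every θ ∈ (0,b) one has cos(c·θ) + (H/(N−1))·(1/c)·sin(c·θ) > 0 and h(θ) ≤ h(0)·(cos(c·θ) + (H/(N−1))·(1/c)·sin(c·θ))^{N−1}. -/
open Set

/-- A `CD(κ,N)` density on the set `I ⊆ ℝ`, for a constant positive curvature
parameter `κ`, with the explicit trigonometric distortion coefficients. -/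
def IsCDPosDensity (κ N : ℝ) (I : Set ℝ) (h : ℝ → ℝ) : Prop :=
  (∀ x ∈ I, 0 ≤ h x) ∧
    ∀ x₀ ∈ I, ∀ x₁ ∈ I, x₀ ≠ x₁ → ∀ t ∈ Set.Icc (0 : ℝ) 1,
      Real.sin (Real.sqrt (κ / (N - 1)) * ((1 - t) * |x₁ - x₀|)) /
            Real.sin (Real.sqrt (κ / (N - 1)) * |x₁ - x₀|) * h x₀ ^ (1 / (N - 1)) +
          Real.sin (Real.sqrt (κ / (N - 1)) * (t * |x₁ - x₀|)) /
            Real.sin (Real.sqrt (κ / (N - 1)) * |x₁ - x₀|) * h x₁ ^ (1 / (N - 1)) ≤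
        h ((1 - t) * x₀ + t * x₁) ^ (1 / (N - 1))
/-!
Write `g = h ^ (1/(N-1))` and `c = √(κ/(N-1))`. On the segment `[0, θ]` the CD condition reads
`sin (c (θ - ε)) g 0 + sin (c ε) g θ ≤ sin (c θ) g ε`, with equality at `ε = 0`. Comparing right
derivatives at `ε = 0` gives `c g θ ≤ c cos (c θ) g 0 + sin (c θ) g'(0)`, and
`g'(0) = g 0 · H/(N-1)` by the chain rule through `log h`. Hence `g θ ≤ g 0 · A` with `A` the
bracket of the statement; `g θ > 0` forces `A > 0`, and raising to the power `N - 1` concludes.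
-/

open Filter Topology Real

theorem HasDerivWithinAt.le_of_eventually_le_nhdsGT {f g : ℝ → ℝ} {f' g' a : ℝ}
    (hf : HasDerivWithinAt f f' (Ioi a) a) (hg : HasDerivWithinAt g g' (Ioi a) a)
    (ha : f a = g a) (hle : ∀ᶠ x in 𝓝[>] a, f x ≤ g x) : f' ≤ g' := by
  rw [hasDerivWithinAt_iff_tendsto_slope' (by simp)] at hf hg
  refine le_of_tendsto_of_tendsto hf hg ?_
  filter_upwards [hle, self_mem_nhdsWithin] with x hx (hax : a < x)
  rw [slope_def_field, slope_def_field, ha]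
  gcongr

theorem HasDerivWithinAt.rpow_const_of_log {h : ℝ → ℝ} {s : Set ℝ} {x H : ℝ} (p : ℝ)
    (hH : HasDerivWithinAt (fun y => Real.log (h y)) H s x)
    (hpos : ∀ᶠ y in 𝓝[s] x, 0 < h y) (hx : 0 < h x) :
    HasDerivWithinAt (fun y => h y ^ p) (h x ^ p * (H * p)) s x := by
  have hexp := (hH.mul_const p).exp
  rw [← rpow_def_of_pos hx] at hexp
  refine hexp.congr_of_eventuallyEq ?_ (rpow_def_of_pos hx p)
  filter_upwards [hpos] with y hy using rpow_def_of_pos hy p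

theorem IsCDPosDensity.sin_mul_add_sin_mul_le {κ N : ℝ} {I : Set ℝ} {h : ℝ → ℝ}
    (hCD : IsCDPosDensity κ N I h) {x₀ x₁ y : ℝ} (hx₀ : x₀ ∈ I) (hx₁ : x₁ ∈ I)
    (hy : y ∈ Icc x₀ x₁) (hlt : x₀ < x₁)
    (hsin : 0 < sin (√(κ / (N - 1)) * (x₁ - x₀))) :
    sin (√(κ / (N - 1)) * (x₁ - y)) * h x₀ ^ (1 / (N - 1)) +
        sin (√(κ / (N - 1)) * (y - x₀)) * h x₁ ^ (1 / (N - 1)) ≤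
      sin (√(κ / (N - 1)) * (x₁ - x₀)) * h y ^ (1 / (N - 1)) := by
  have hd : 0 < x₁ - x₀ := sub_pos.2 hlt
  have ht : (y - x₀) / (x₁ - x₀) ∈ Icc (0 : ℝ) 1 :=
    ⟨div_nonneg (by linarith [hy.1]) hd.le, (div_le_one hd).2 (by linarith [hy.2])⟩
  have hCD' := hCD.2 x₀ hx₀ x₁ hx₁ hlt.ne _ ht
  rw [abs_of_pos hd] at hCD'
  have e₁ : (1 - (y - x₀) / (x₁ - x₀)) * (x₁ - x₀) = x₁ - y := by field_simp; ring
  have e₂ : (y - x₀) / (x₁ - x₀) * (x₁ - x₀) = y - x₀ := by field_simp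
  have e₃ : (1 - (y - x₀) / (x₁ - x₀)) * x₀ + (y - x₀) / (x₁ - x₀) * x₁ = y := by
    field_simp; ring
  rw [e₁, e₂, e₃, div_mul_eq_mul_div, div_mul_eq_mul_div, ← add_div, div_le_iff₀ hsin,
    mul_comm (h y ^ _)] at hCD'
  exact hCD'

theorem mul_le_of_sin_mul_add_sin_mul_le_of_hasDerivWithinAt {g : ℝ → ℝ} {c x₀ x₁ G : ℝ}
    (hlt : x₀ < x₁) (hg : HasDerivWithinAt g G (Ioi x₀) x₀)
    (hle : ∀ y ∈ Ioo x₀ x₁,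
      sin (c * (x₁ - y)) * g x₀ + sin (c * (y - x₀)) * g x₁ ≤ sin (c * (x₁ - x₀)) * g y) :
    c * g x₁ ≤ c * cos (c * (x₁ - x₀)) * g x₀ + sin (c * (x₁ - x₀)) * G := by
  have hlower : HasDerivAt (fun y => sin (c * (y - x₀)) * g x₁) (c * g x₁) x₀ := by
    have := ((((hasDerivAt_id x₀).sub_const x₀).const_mul c).sin).mul_const (g x₁)
    simpa using this
  have hupper : HasDerivWithinAt (fun y => sin (c * (x₁ - x₀)) * g y - sin (c * (x₁ - y)) * g x₀)
      (c * cos (c * (x₁ - x₀)) * g x₀ + sin (c * (x₁ - x₀)) * G) (Ioi x₀) x₀ := by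
    have hsin := ((((hasDerivAt_id x₀).const_sub x₁).const_mul c).sin).mul_const (g x₀)
    refine ((hg.const_mul (sin (c * (x₁ - x₀)))).sub hsin.hasDerivWithinAt).congr_deriv ?_
    simp only [id]
    ring
  refine hlower.hasDerivWithinAt.le_of_eventually_le_nhdsGT hupper (by simp) ?_
  filter_upwards [Ioo_mem_nhdsGT hlt] with y hy
  linarith [hle y hy]

theorem le_mul_rpow_of_rpow_inv_le {x y A p : ℝ} (hx : 0 ≤ x) (hy : 0 ≤ y) (hA : 0 ≤ A)
    (hp : 0 < p) (hle : x ^ p⁻¹ ≤ y ^ p⁻¹ * A) : x ≤ y * A ^ p :=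
  calc x = (x ^ p⁻¹) ^ p := (rpow_inv_rpow hx hp.ne').symm
    _ ≤ (y ^ p⁻¹ * A) ^ p := rpow_le_rpow (rpow_nonneg hx _) hle hp.le
    _ = y * A ^ p := by rw [mul_rpow (rpow_nonneg hy _) hA, rpow_inv_rpow hy hp.ne']

/-- Jacobian comparison for `CD(κ,N)` densities (`κ > 0`) on `[a,b]` with `a ≤ 0 < b`
and `b - a ≤ π·√((N-1)/κ)`, where `c = √(κ/(N-1))` and `H` is the right logarithmic
derivative of `h` at `0`. -/
theorem cd_pos_density_jacobian_comparison (κ N a b H : ℝ) (h : ℝ → ℝ)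
    (hκ : 0 < κ) (hN : 1 < N) (ha : a ≤ 0) (hb : 0 < b)
    (hdiam : b - a ≤ Real.pi * Real.sqrt ((N - 1) / κ))
    (hCD : IsCDPosDensity κ N (Set.Icc a b) h)
    (hpos : ∀ x ∈ Set.Ico a b, 0 < h x)
    (hH : HasDerivWithinAt (fun y => Real.log (h y)) H (Set.Ioi 0) 0) :
    ∀ θ ∈ Set.Ioo 0 b,
      0 < Real.cos (Real.sqrt (κ / (N - 1)) * θ) +
          H / (N - 1) * (Real.sqrt (κ / (N - 1)))⁻¹ *
            Real.sin (Real.sqrt (κ / (N - 1)) * θ) ∧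
      h θ ≤ h 0 * (Real.cos (Real.sqrt (κ / (N - 1)) * θ) +
          H / (N - 1) * (Real.sqrt (κ / (N - 1)))⁻¹ *
            Real.sin (Real.sqrt (κ / (N - 1)) * θ)) ^ (N - 1) := by
  rintro θ ⟨hθ, hθb⟩
  set c := √(κ / (N - 1))
  set g : ℝ → ℝ := fun x => h x ^ (1 / (N - 1))
  set A := cos (c * θ) + H / (N - 1) * c⁻¹ * sin (c * θ)
  have hN₁ : 0 < N - 1 := sub_pos.2 hN
  have hc : 0 < c := sqrt_pos.2 (div_pos hκ hN₁)
  have hsin : 0 < sin (c * θ) := by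
    refine sin_pos_of_pos_of_lt_pi (mul_pos hc hθ) ?_
    rw [← inv_div κ, sqrt_inv] at hdiam
    rw [← lt_div_iff₀' hc, div_eq_mul_inv]
    linarith
  have h₀ : 0 < h 0 := hpos 0 ⟨ha, hb⟩
  have hθ_pos : 0 < h θ := hpos θ ⟨ha.trans hθ.le, hθb⟩
  have hg : HasDerivWithinAt g (g 0 * (H * (1 / (N - 1)))) (Ioi 0) 0 := by
    refine hH.rpow_const_of_log _ ?_ h₀
    filter_upwards [Ioo_mem_nhdsGT hb] with x hx using hpos x ⟨ha.trans hx.1.le, hx.2⟩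
  have hslope := mul_le_of_sin_mul_add_sin_mul_le_of_hasDerivWithinAt hθ hg fun y hy =>
    hCD.sin_mul_add_sin_mul_le ⟨ha, hb.le⟩ ⟨ha.trans hθ.le, hθb.le⟩ (Ioo_subset_Icc_self hy) hθ
      (by rwa [sub_zero])
  have hgθ : g θ ≤ g 0 * A := by
    rw [sub_zero] at hslope
    refine le_of_mul_le_mul_left (hslope.trans_eq ?_) hc
    simp only [A, c]
    field_simp
  have hA : 0 < A := pos_of_mul_pos_right ((rpow_pos_of_pos hθ_pos _).trans_le hgθ) (by positivity)
  simp only [g, one_div] at hgθ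
  exact ⟨hA, le_mul_rpow_of_rpow_inv_le hθ_pos.le h₀.le hA.le hN₁ hgθ⟩
end

section
/- Let κ < 0 and N > 1 be real, let I be an open real interval, and let h be a CD(κ,N) density on I which is positive at every point of I. Then the right derivative D(x) := (log∘h)'⁺(x) exists in ℝ at every x ∈ I, and for all x, y ∈ I with x < y one has D(y) − D(x) + (1/(N−1))·∫ₓʸ D(r)² dr ≤ −κ·(y−x), where the integral is a Lebesgue integral. -/
/-!
Put `l = √(-κ/(N-1))` and `g = h^{1/(N-1)}`. The CD condition says that `g` is `sinh`-concave,
a weak form of `g'' ≤ l² g`. In the chart `v = -e^{-2lr}/(2l)` the function `Φ(v) = g(r) e^{-lr}`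
is then concave, because the chart turns the solutions `e^{±lr}` of `g'' = l² g` into affine
functions of `v`. So `Φ` and `log Φ` have antitone right derivatives, and
`u = (log g)'⁺ = l + a(r) e^{-2lr}` with `a = (log Φ)'⁺ ∘ v` antitone. Concavity of `Φ` gives the
Riccati inequality `u' ≤ l² - u²` wherever `u` is differentiable; as `u` is antitone up to a smooth
function, its singular part can only decrease, whence `u(y) - u(x) ≤ ∫ₓʸ (l² - u²)`.
Finally `(log h)'⁺ = (N - 1) u`.
-/

open Set MeasureTheory

open Filter Topology Real

namespace ConcaveOn

variable {S : Set ℝ} {f : ℝ → ℝ} {x : ℝ}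

lemma hasDerivWithinAt_rightDeriv_of_mem_interior (hf : ConcaveOn ℝ S f) (hx : x ∈ interior S) :
    HasDerivWithinAt f (derivWithin f (Ioi x) x) (Ioi x) x :=
  (differentiableWithinAt_neg_iff.mp
    (hf.neg.differentiableWithinAt_Ioi_of_mem_interior hx)).hasDerivWithinAt

lemma antitoneOn_rightDeriv (hf : ConcaveOn ℝ S f) :
    AntitoneOn (fun x ↦ derivWithin f (Ioi x) x) (interior S) := fun x hx y hy hxy ↦ by
  simpa [derivWithin.neg] using hf.neg.monotoneOn_rightDeriv hx hy hxy

lemma log (hf : ConcaveOn ℝ S f) (hpos : ∀ x ∈ S, 0 < f x) : ConcaveOn ℝ S (Real.log ∘ f) := by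
  refine ⟨hf.1, fun x hx y hy a b ha hb hab ↦ ?_⟩
  calc a • Real.log (f x) + b • Real.log (f y) ≤ Real.log (a • f x + b • f y) :=
        strictConcaveOn_log_Ioi.concaveOn.2 (hpos x hx) (hpos y hy) ha hb hab
    _ ≤ Real.log (f (a • x + b • y)) :=
        Real.log_le_log ((convex_Ioi (0 : ℝ)) (hpos x hx) (hpos y hy) ha hb hab)
          (hf.2 hx hy ha hb hab)

end ConcaveOn

lemma le_of_hasDerivWithinAt_Ioi_of_eventually_le {f φ : ℝ → ℝ} {f' φ' x : ℝ}
    (hf : HasDerivWithinAt f f' (Ioi x) x) (hφ : HasDerivWithinAt φ φ' (Ioi x) x)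
    (hx : f x = φ x) (hle : ∀ᶠ s in 𝓝[>] x, f s ≤ φ s) : f' ≤ φ' := by
  have h := (hasDerivWithinAt_iff_tendsto_slope' self_notMem_Ioi).mp (hφ.sub hf)
  have : 0 ≤ φ' - f' := by
    refine ge_of_tendsto h ?_
    filter_upwards [hle, self_mem_nhdsWithin] with s hs (hxs : x < s)
    rw [slope_def_field]
    exact div_nonneg (by simp only [Pi.sub_apply]; linarith) (by linarith)
  linarith

lemma sub_le_integral_of_antitoneOn_sub {f s s' G : ℝ → ℝ} {a b : ℝ} (hab : a ≤ b)
    (hfs : AntitoneOn (f - s) (Icc a b)) (hs : ∀ r, HasDerivAt s (s' r) r)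
    (hs' : IntervalIntegrable s' volume a b) (hG : IntervalIntegrable G volume a b)
    (hfG : ∀ r ∈ Ioo a b, ∀ f', HasDerivAt f f' r → f' ≤ G r) :
    f b - f a ≤ ∫ r in a..b, G r := by
  have hk : MonotoneOn (s - f) (Icc a b) := neg_sub f s ▸ hfs.neg
  have hk_le : ∫ r in a..b, deriv (s - f) r ≤ s b - f b - (s a - f a) := by
    have h := (uIcc_of_le hab ▸ hk).intervalIntegral_deriv_mem_uIcc
    rw [uIcc_of_le (sub_nonneg.2 (hk (left_mem_Icc.2 hab) (right_mem_Icc.2 hab) hab))] at h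
    exact h.2
  have hs_int : ∫ r in a..b, s' r = s b - s a :=
    intervalIntegral.integral_eq_sub_of_hasDerivAt (fun r _ ↦ hs r) hs'
  have hderiv : ∀ᵐ r, r ∈ Ioo a b → s' r - G r ≤ deriv (s - f) r := by
    filter_upwards [hk.ae_differentiableWithinAt_of_mem] with r hr hrab
    have hd := (hr (Ioo_subset_Icc_self hrab)).differentiableAt (Icc_mem_nhds hrab.1 hrab.2)
    have hf : HasDerivAt f (s' r - deriv (s - f) r) r := by
      simpa using (hs r).sub hd.hasDerivAt
    linarith [hfG r hrab _ hf]
  have hmono : ∫ r in a..b, (s' r - G r) ≤ ∫ r in a..b, deriv (s - f) r := by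
    refine intervalIntegral.integral_mono_ae_restrict hab (hs'.sub hG)
      (uIcc_of_le hab ▸ hk).intervalIntegrable_deriv ?_
    rwa [EventuallyLE, ← Measure.restrict_congr_set Ioo_ae_eq_Icc,
      ae_restrict_iff' measurableSet_Ioo]
  rw [intervalIntegral.integral_sub hs' hG, hs_int] at hmono
  linarith

lemma intervalIntegrable_add_sq {k S : ℝ → ℝ} {a b : ℝ} (hab : a ≤ b)
    (hk : AntitoneOn k (Icc a b)) (hk₀ : ∀ r ∈ Icc a b, 0 ≤ k r) (hS : Continuous S) :
    IntervalIntegrable (fun r ↦ (k r + S r) ^ 2) volume a b := by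
  have hk2 : AntitoneOn (fun r ↦ k r ^ 2) (Icc a b) := fun r hr s hs hrs ↦
    pow_le_pow_left₀ (hk₀ s hs) (hk hr hs hrs) 2
  have hk_int : IntervalIntegrable k volume a b := (uIcc_of_le hab ▸ hk).intervalIntegrable
  have hk2_int : IntervalIntegrable (fun r ↦ k r ^ 2) volume a b :=
    (uIcc_of_le hab ▸ hk2).intervalIntegrable
  convert (hk2_int.add (hk_int.mul_continuousOn (hS.const_smul (2 : ℝ)).continuousOn)).add
    ((hS.pow 2).intervalIntegrable a b) using 1
  ext r; simp only [Pi.smul_apply, Pi.pow_apply, smul_eq_mul]; ring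

lemma le_sq_sub_sq_of_hasDerivWithinAt_Ioi {l r u' : ℝ} {p a u : ℝ → ℝ} (hpr : 0 < p r)
    (hpa : HasDerivWithinAt p (a r * p r * exp (-(2 * l * r))) (Ioi r) r)
    (hap : ∀ᶠ s in 𝓝[>] r, 0 < p s ∧ a s * p s ≤ a r * p r)
    (hu : ∀ s, u s = l + a s * exp (-(2 * l * s))) (hu' : HasDerivWithinAt u u' (Ioi r) r) :
    u' ≤ l ^ 2 - u r ^ 2 := by
  set c : ℝ → ℝ := fun s ↦ exp (-(2 * l * s))
  replace hu : ∀ s, u s = l + a s * c s := hu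
  have hc : HasDerivAt c (-(2 * l) * c r) r := by
    simpa [c, mul_comm] using ((hasDerivAt_id r).const_mul (2 * l)).neg.exp
  -- freezing the antitone factor `a * p` at `r` gives an upper barrier for `u` to the right of `r`
  have hφ : HasDerivWithinAt (fun s ↦ l + a r * p r * (c s / p s)) (l ^ 2 - u r ^ 2) (Ioi r) r := by
    have h := ((hc.hasDerivWithinAt.div hpa hpr.ne').const_mul (a r * p r)).const_add l
    refine h.congr_deriv ?_
    rw [hu]; field_simp; ring
  refine le_of_hasDerivWithinAt_Ioi_of_eventually_le hu' hφ (by rw [hu]; field_simp) ?_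
  filter_upwards [hap] with s ⟨hps, has⟩
  calc u s = l + a s * p s * (c s / p s) := by rw [hu]; field_simp
    _ ≤ l + a r * p r * (c s / p s) := by gcongr

lemma integral_riccati_le {l x y : ℝ} (hl : 0 ≤ l) (hxy : x ≤ y) {p a u : ℝ → ℝ}
    (hp : ∀ r ∈ Icc x y, 0 < p r)
    (hpa : ∀ r ∈ Ioo x y, HasDerivWithinAt p (a r * p r * exp (-(2 * l * r))) (Ioi r) r)
    (ha : AntitoneOn a (Icc x y)) (hap : AntitoneOn (fun r ↦ a r * p r) (Icc x y))
    (hu : ∀ r, u r = l + a r * exp (-(2 * l * r))) :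
    u y - u x + ∫ r in x..y, u r ^ 2 ≤ l ^ 2 * (y - x) := by
  set c : ℝ → ℝ := fun r ↦ exp (-(2 * l * r))
  have hc_anti : Antitone c := fun r s hrs ↦ exp_le_exp.2 (by nlinarith)
  have hy : y ∈ Icc x y := right_mem_Icc.2 hxy
  have hriccati (r : ℝ) (hr : r ∈ Ioo x y) (u' : ℝ) (hu' : HasDerivAt u u' r) :
      u' ≤ l ^ 2 - u r ^ 2 := by
    have hr' := Ioo_subset_Icc_self hr
    refine le_sq_sub_sq_of_hasDerivWithinAt_Ioi (hp r hr') (hpa r hr) ?_ hu hu'.hasDerivWithinAt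
    filter_upwards [Ioo_mem_nhdsGT hr.2] with s hs
    have hs' : s ∈ Icc x y := ⟨hr.1.le.trans hs.1.le, hs.2.le⟩
    exact ⟨hp s hs', hap hr' hs' hs.1.le⟩
  set k : ℝ → ℝ := fun r ↦ (a r - a y) * c r
  set S : ℝ → ℝ := fun r ↦ l + a y * c r
  have huk : u = fun r ↦ k r + S r := by ext r; simp only [hu, k, S, c]; ring
  have hk : AntitoneOn k (Icc x y) := fun r hr s hs hrs ↦
    mul_le_mul (sub_le_sub_right (ha hr hs hrs) _) (hc_anti hrs) (exp_pos _).le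
      (sub_nonneg.2 (ha hr hy hr.2))
  have hu2 : IntervalIntegrable (fun r ↦ u r ^ 2) volume x y := by
    rw [huk]
    exact intervalIntegrable_add_sq hxy hk
      (fun r hr ↦ mul_nonneg (sub_nonneg.2 (ha hr hy hr.2)) (exp_pos _).le) (by fun_prop)
  have hS (r : ℝ) : HasDerivAt S (a y * (-(2 * l) * c r)) r := by
    simpa [S, c, mul_comm, mul_assoc] using
      (((hasDerivAt_id r).const_mul (2 * l)).neg.exp.const_mul (a y)).const_add l
  have h := sub_le_integral_of_antitoneOn_sub hxy
    (by rwa [huk, ← Pi.add_def, add_sub_cancel_right]) hS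
    ((by fun_prop : Continuous fun r ↦ a y * (-(2 * l) * c r)).intervalIntegrable x y)
    (intervalIntegrable_const.sub hu2) hriccati
  rw [intervalIntegral.integral_sub intervalIntegrable_const hu2,
    intervalIntegral.integral_const, smul_eq_mul] at h
  linarith

lemma concaveOn_image_comp_invFun {σ p : ℝ → ℝ} {I : Set ℝ} (hσ : StrictMono σ)
    (hσc : Continuous σ) (hI : I.OrdConnected)
    (h : ∀ r₀ ∈ I, ∀ r₁ ∈ I, ∀ s ∈ Ioo r₀ r₁,
      (σ r₁ - σ s) * p r₀ + (σ s - σ r₀) * p r₁ ≤ (σ r₁ - σ r₀) * p s) :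
    ConcaveOn ℝ (σ '' I) (p ∘ Function.invFun σ) := by
  have hinv (r : ℝ) : (p ∘ Function.invFun σ) (σ r) = p r :=
    congrArg p (Function.leftInverse_invFun hσ.injective r)
  have hJ : (σ '' I).OrdConnected := (hI.isPreconnected.image σ hσc.continuousOn).ordConnected
  refine concaveOn_of_slope_anti_adjacent hJ.convex ?_
  rintro _ v _ ⟨r₀, hr₀, rfl⟩ ⟨r₁, hr₁, rfl⟩ h₀ h₁
  obtain ⟨s, -, rfl⟩ := hJ.out (mem_image_of_mem σ hr₀) (mem_image_of_mem σ hr₁) ⟨h₀.le, h₁.le⟩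
  rw [hinv, hinv, hinv, div_le_div_iff₀ (sub_pos.2 h₁) (sub_pos.2 h₀)]
  linear_combination h r₀ hr₀ r₁ hr₁ s ⟨hσ.lt_iff_lt.1 h₀, hσ.lt_iff_lt.1 h₁⟩

noncomputable def hypChart (l r : ℝ) : ℝ := -exp (-(2 * l * r)) / (2 * l)

lemma hypChart_sub {l : ℝ} (hl : l ≠ 0) (a b : ℝ) :
    hypChart l b - hypChart l a = exp (-(l * a)) * exp (-(l * b)) * sinh (l * (b - a)) / l := by
  have hsq (r : ℝ) : exp (-(2 * l * r)) = exp (-(l * r)) ^ 2 := by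
    rw [← exp_nat_mul]; ring_nf
  have hsinh : sinh (l * (b - a)) =
      (exp (-(l * a)) / exp (-(l * b)) - exp (-(l * b)) / exp (-(l * a))) / 2 := by
    rw [sinh_eq, ← exp_sub, ← exp_sub]; ring_nf
  rw [hypChart, hypChart, hsq, hsq, hsinh]
  field_simp
  ring

lemma hypChart_strictMono {l : ℝ} (hl : 0 < l) : StrictMono (hypChart l) := fun a b hab ↦ by
  have := sinh_pos_iff.2 (mul_pos hl (sub_pos.2 hab))
  exact sub_pos.1 (hypChart_sub hl.ne' a b ▸ by positivity)

lemma continuous_hypChart (l : ℝ) : Continuous (hypChart l) := by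
  unfold hypChart; fun_prop

lemma hasDerivAt_hypChart {l : ℝ} (hl : l ≠ 0) (r : ℝ) :
    HasDerivAt (hypChart l) (exp (-(2 * l * r))) r := by
  refine (((hasDerivAt_id r).const_mul (2 * l)).neg.exp.neg.div_const (2 * l)).congr_deriv ?_
  field_simp
  simp

def SinhConcaveOn (l : ℝ) (I : Set ℝ) (g : ℝ → ℝ) : Prop :=
  ∀ r₀ ∈ I, ∀ r₁ ∈ I, ∀ s ∈ Ioo r₀ r₁,
    sinh (l * (r₁ - s)) * g r₀ + sinh (l * (s - r₀)) * g r₁ ≤ sinh (l * (r₁ - r₀)) * g s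

lemma SinhConcaveOn.concaveOn_hypChart {l : ℝ} {I : Set ℝ} {g : ℝ → ℝ} (hg : SinhConcaveOn l I g)
    (hl : 0 < l) (hI : I.OrdConnected) :
    ConcaveOn ℝ (hypChart l '' I)
      ((fun r ↦ g r * exp (-(l * r))) ∘ Function.invFun (hypChart l)) := by
  refine concaveOn_image_comp_invFun (hypChart_strictMono hl) (continuous_hypChart l) hI
    fun r₀ hr₀ r₁ hr₁ s hs ↦ ?_
  simp only [hypChart_sub hl.ne']
  have hE : 0 ≤ exp (-(l * r₀)) * exp (-(l * r₁)) * exp (-(l * s)) / l := by positivity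
  have key := mul_le_mul_of_nonneg_left (hg r₀ hr₀ r₁ hr₁ s hs) hE
  field_simp at key ⊢
  linarith

lemma StrictMono.mem_interior_image {σ : ℝ → ℝ} (hσ : StrictMono σ) {I : Set ℝ}
    (hJ : (σ '' I).OrdConnected) {r : ℝ} (hr : r ∈ interior I) : σ r ∈ interior (σ '' I) := by
  obtain ⟨p, q, ⟨hpr, hrq⟩, hpq⟩ :=
    mem_nhds_iff_exists_Ioo_subset.1 (mem_interior_iff_mem_nhds.1 hr)
  obtain ⟨p', hpp', hp'r⟩ := exists_between hpr
  obtain ⟨q', hrq', hq'q⟩ := exists_between hrq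
  refine mem_interior_iff_mem_nhds.2 (mem_of_superset (Ioo_mem_nhds (hσ hp'r) (hσ hrq')) ?_)
  exact Ioo_subset_Icc_self.trans (hJ.out (mem_image_of_mem σ (hpq ⟨hpp', hp'r.trans hrq⟩))
    (mem_image_of_mem σ (hpq ⟨hpr.trans hrq', hq'q⟩)))

namespace SinhConcaveOn

variable {l : ℝ} {I : Set ℝ} {g : ℝ → ℝ}

lemma exists_rightDeriv (hg : SinhConcaveOn l I g) (hl : 0 < l) (hI : IsOpen I)
    (hI' : I.OrdConnected) (hpos : ∀ r ∈ I, 0 < g r) :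
    ∃ a : ℝ → ℝ, AntitoneOn a I ∧ AntitoneOn (fun r ↦ a r * (g r * exp (-(l * r)))) I ∧
      ∀ r ∈ I, HasDerivWithinAt (fun s ↦ g s * exp (-(l * s)))
        (a r * (g r * exp (-(l * r))) * exp (-(2 * l * r))) (Ioi r) r := by
  set p : ℝ → ℝ := fun s ↦ g s * exp (-(l * s))
  set σ := hypChart l
  set Φ := p ∘ Function.invFun σ
  have hσ : StrictMono σ := hypChart_strictMono hl
  have hΦσ (r : ℝ) : Φ (σ r) = p r := congrArg p (Function.leftInverse_invFun hσ.injective r)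
  have hΦ : ConcaveOn ℝ (σ '' I) Φ := hg.concaveOn_hypChart hl hI'
  have hΦpos : ∀ v ∈ σ '' I, 0 < Φ v := by
    rintro _ ⟨r, hr, rfl⟩
    rw [hΦσ]; exact mul_pos (hpos r hr) (exp_pos _)
  have hlogΦ : ConcaveOn ℝ (σ '' I) (log ∘ Φ) := hΦ.log hΦpos
  have hint (r : ℝ) (hr : r ∈ I) : σ r ∈ interior (σ '' I) :=
    hσ.mem_interior_image hΦ.1.ordConnected (by rwa [hI.interior_eq])
  have hΦ' (r : ℝ) (hr : r ∈ I) := hΦ.hasDerivWithinAt_rightDeriv_of_mem_interior (hint r hr)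
  have hlogΦ' (r : ℝ) (hr : r ∈ I) := hlogΦ.hasDerivWithinAt_rightDeriv_of_mem_interior (hint r hr)
  have hlog_mul (r : ℝ) (hr : r ∈ I) :
      derivWithin (log ∘ Φ) (Ioi (σ r)) (σ r) * p r = derivWithin Φ (Ioi (σ r)) (σ r) := by
    have hpr : p r ≠ 0 := hΦσ r ▸ (hΦpos _ (mem_image_of_mem σ hr)).ne'
    rw [(uniqueDiffWithinAt_Ioi _).eq_deriv _ (hlogΦ' r hr) ((hΦ' r hr).log (hΦσ r ▸ hpr)), hΦσ]
    field_simp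
  refine ⟨fun r ↦ derivWithin (log ∘ Φ) (Ioi (σ r)) (σ r), fun r hr s hs hrs ↦ ?_,
    fun r hr s hs hrs ↦ ?_, fun r hr ↦ ?_⟩
  · exact hlogΦ.antitoneOn_rightDeriv (hint r hr) (hint s hs) (hσ.monotone hrs)
  · exact (hlog_mul s hs).trans_le <| (hΦ.antitoneOn_rightDeriv (hint r hr) (hint s hs)
      (hσ.monotone hrs)).trans_eq (hlog_mul r hr).symm
  · rw [hlog_mul r hr, ← show Φ ∘ σ = p from funext hΦσ]
    exact (hΦ' r hr).comp r (hasDerivAt_hypChart hl.ne' r).hasDerivWithinAt fun s hs ↦ hσ hs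

theorem exists_integral_riccati_le (hg : SinhConcaveOn l I g) (hl : 0 < l) (hI : IsOpen I)
    (hI' : I.OrdConnected) (hpos : ∀ r ∈ I, 0 < g r) :
    ∃ u : ℝ → ℝ, (∀ x ∈ I, HasDerivWithinAt (fun y ↦ log (g y)) (u x) (Ioi x) x) ∧
      ∀ x ∈ I, ∀ y ∈ I, x < y → u y - u x + ∫ r in x..y, u r ^ 2 ≤ l ^ 2 * (y - x) := by
  obtain ⟨a, ha, hap, hp⟩ := hg.exists_rightDeriv hl hI hI' hpos
  have hp_pos (r : ℝ) (hr : r ∈ I) : 0 < g r * exp (-(l * r)) := mul_pos (hpos r hr) (exp_pos _)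
  refine ⟨fun r ↦ l + a r * exp (-(2 * l * r)), fun x hx ↦ ?_, fun x hx y hy hxy ↦ ?_⟩
  · have hlog (s : ℝ) (hs : s ∈ I) : log (g s) = log (g s * exp (-(l * s))) + l * s := by
      rw [log_mul (hpos s hs).ne' (exp_pos _).ne', log_exp]; ring
    refine ((((hp x hx).log (hp_pos x hx).ne').add
      ((hasDerivAt_id x).const_mul l).hasDerivWithinAt).congr_of_eventuallyEq ?_
      (hlog x hx)).congr_deriv ?_
    · filter_upwards [nhdsWithin_le_nhds (hI.mem_nhds hx)] with s hs using hlog s hs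
    · field_simp [(hpos x hx).ne']
      ring
  · have hIcc := hI'.out hx hy
    exact integral_riccati_le hl.le hxy.le (fun r hr ↦ hp_pos r (hIcc hr))
      (fun r hr ↦ hp r (hIcc (Ioo_subset_Icc_self hr))) (ha.mono hIcc) (hap.mono hIcc) fun r ↦ rfl

end SinhConcaveOn

lemma IsCDNegDensity.sinhConcaveOn {κ N : ℝ} {I : Set ℝ} {h : ℝ → ℝ}
    (hCD : IsCDNegDensity κ N I h) :
    SinhConcaveOn √(-κ / (N - 1)) I (fun x ↦ h x ^ (1 / (N - 1))) := by
  intro r₀ hr₀ r₁ hr₁ s hs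
  have hd : 0 < r₁ - r₀ := by linarith [hs.1, hs.2]
  rcases (sqrt_nonneg (-κ / (N - 1))).eq_or_lt with hl | hl
  · simp [← hl]
  have ht : (s - r₀) / (r₁ - r₀) ∈ Icc (0 : ℝ) 1 :=
    ⟨div_nonneg (by linarith [hs.1]) hd.le, (div_le_one hd).2 (by linarith [hs.2])⟩
  have key := hCD.2 r₀ hr₀ r₁ hr₁ (sub_pos.1 hd).ne _ ht
  rw [abs_of_pos hd, show (1 - (s - r₀) / (r₁ - r₀)) * (r₁ - r₀) = r₁ - s by field_simp; ring,
    show (s - r₀) / (r₁ - r₀) * (r₁ - r₀) = s - r₀ by field_simp,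
    show (1 - (s - r₀) / (r₁ - r₀)) * r₀ + (s - r₀) / (r₁ - r₀) * r₁ = s by field_simp; ring,
    div_mul_eq_mul_div, div_mul_eq_mul_div, ← add_div,
    div_le_iff₀ (sinh_pos_iff.2 (mul_pos hl hd))] at key
  linarith

/-- One-dimensional Bochner-type inequality along a transport ray: for a positive
`CD(κ,N)` density (`κ < 0`) on an open interval `I`, the right derivative
`D = (log h)'⁺` exists everywhere on `I`, and it satisfies the integrated Riccati
inequality `D(y) - D(x) + (1/(N-1)) ∫ₓʸ D² ≤ -κ·(y-x)` for `x < y` in `I`. -/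
theorem cd_neg_density_bochner (κ N : ℝ) (I : Set ℝ) (h : ℝ → ℝ)
    (hκ : κ < 0) (hN : 1 < N) (hI : IsOpen I) (hI' : I.OrdConnected)
    (hCD : IsCDNegDensity κ N I h) (hpos : ∀ x ∈ I, 0 < h x) :
    ∃ D : ℝ → ℝ,
      (∀ x ∈ I, HasDerivWithinAt (fun y => Real.log (h y)) (D x) (Set.Ioi x) x) ∧
      ∀ x ∈ I, ∀ y ∈ I, x < y →
        D y - D x + (1 / (N - 1)) * ∫ r in x..y, (D r) ^ 2 ≤ -κ * (y - x) := by
  have hN1 : 0 < N - 1 := sub_pos.2 hN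
  have hl : 0 < √(-κ / (N - 1)) := sqrt_pos.2 (div_pos (neg_pos.2 hκ) hN1)
  have hl2 : √(-κ / (N - 1)) ^ 2 = -κ / (N - 1) := sq_sqrt (div_pos (neg_pos.2 hκ) hN1).le
  obtain ⟨u, hu, hric⟩ := hCD.sinhConcaveOn.exists_integral_riccati_le hl hI hI'
    fun x hx ↦ rpow_pos_of_pos (hpos x hx) _
  refine ⟨fun x ↦ (N - 1) * u x, fun x hx ↦ ?_, fun x hx y hy hxy ↦ ?_⟩
  · have hlog (y : ℝ) (hy : y ∈ I) : log (h y) = (N - 1) * log (h y ^ (1 / (N - 1))) := by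
      rw [log_rpow (hpos y hy)]; field_simp
    refine ((hu x hx).const_mul (N - 1)).congr_of_eventuallyEq ?_ (hlog x hx)
    filter_upwards [nhdsWithin_le_nhds (hI.mem_nhds hx)] with y hy using hlog y hy
  · calc (N - 1) * u y - (N - 1) * u x + 1 / (N - 1) * ∫ r in x..y, ((N - 1) * u r) ^ 2
        = (N - 1) * (u y - u x + ∫ r in x..y, u r ^ 2) := by
          simp only [mul_pow, intervalIntegral.integral_const_mul]; field_simp
      _ ≤ (N - 1) * (√(-κ / (N - 1)) ^ 2 * (y - x)) := by gcongr; exact hric x hx y hy hxy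
      _ = -κ * (y - x) := by rw [hl2]; field_simp
end
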